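/- arXiv:0810.4112 — 6 statements merged into one kernel-verified Lean document; each statement's English description precedes it below -/
import Mathlib

section
/- Let k be a field, let f ∈ k((x))[[y]] with y-constant term f_0 ∈ x·k[[x]] \ x²·k[[x]], let g ∈ k((x))[[y]] have y-adic order exactly 1, and let φ: k((u))((v)) → k((x))((y)) be the termwise-substitution k-algebra homomorphism with φ(u) = f, φ(v) = g. Let h ∈ k((u))((v)) have v-adic order at least −1, say h = Σ_{j≥−1} h_j(u) v^j. Then the coefficient of y^{−1} (an element of k((x))) of φ(h)·(∂f/∂x · ∂g/∂y − ∂f/∂y · ∂g/∂x) equals h_{−1}(f_0)·(df_0/dx), where h_{−1}(f_0) denotes the substitution of f_0 into the Laurent series h_{−1} ∈ k((u)) (well defined since f_0 has x-adic order exactly 1). That is, for a formal 2-form h du∧dv with at most a simple pole (v-order ≥ −1), the one-codimensional residue transforms as the pullback of the 1-form h_{−1}(u) du under u = f_0(x). -/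
/-!
STATEMENT 3: For a formal 2-form `h du∧dv` with at most a simple pole along `v = 0`
(`v`-adic order of `h` at least `−1`), the one-codimensional residue transforms as
the pullback of the 1-form `h₋₁(u) du` under `u = f₀(x)`:  the `y⁻¹`-coefficient of
`φ(h)·(∂f/∂x·∂g/∂y − ∂f/∂y·∂g/∂x)` equals `h₋₁(f₀)·(df₀/dx)`, where `φ` is the
termwise-substitution homomorphism with `φ(u) = f`, `φ(v) = g`, and `h₋₁(f₀)` is the
(coefficientwise convergent) substitution of `f₀ = f(x,0)` into the Laurent series
`h₋₁ ∈ k((u))`.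
-/

/-- Formal derivative of a Hahn series over `ℤ` (termwise in the variable). -/
noncomputable def hahnDeriv {V : Type*} [AddCommGroup V] (h : HahnSeries ℤ V) :
    HahnSeries ℤ V where
  coeff j := (j + 1) • h.coeff (j + 1)
  isPWO_support' := by
    refine (h.isPWO_support'.image_of_monotone
      (f := fun x : ℤ => x - 1) (fun a b hab => by exact sub_le_sub_right hab 1)).mono ?_
    intro j hj
    rw [Function.mem_support] at hj
    refine ⟨j + 1, ?_, add_sub_cancel_right j 1⟩
    rw [Function.mem_support]
    intro h0
    exact hj (by rw [h0, smul_zero])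

@[simp] lemma hahnDeriv_zero {V : Type*} [AddCommGroup V] :
    hahnDeriv (0 : HahnSeries ℤ V) = 0 := by
  ext j
  simp [hahnDeriv]

/-- The partial derivative `∂/∂y` (in the outer variable) on `k((x))((y))`. -/
noncomputable def derivV {k : Type*} [Field k] :
    LaurentSeries (LaurentSeries k) → LaurentSeries (LaurentSeries k) := hahnDeriv

/-- The partial derivative `∂/∂x` (coefficientwise in the inner variable) on
`k((x))((y))`. -/
noncomputable def derivU {k : Type*} [Field k] (h : LaurentSeries (LaurentSeries k)) :
    LaurentSeries (LaurentSeries k) where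
  coeff j := hahnDeriv (h.coeff j)
  isPWO_support' := by
    refine h.isPWO_support'.mono ?_
    intro j hj
    rw [Function.mem_support] at hj ⊢
    intro h0
    exact hj (by rw [h0, hahnDeriv_zero])

/-!
Since `f` has `y`-order `0` and `g` has `y`-order `1`, the monomial `f ^ i * g ^ j` has
`y`-order `j` with leading coefficient `f₀ ^ i * g₁ ^ j`, where `g₁` is the `y`-coefficient
of `g`. Hence `φ h` has `y`-order at least `-1`, with `y⁻¹`-coefficient `h₋₁(f₀) * g₁⁻¹`;
the `x`-adic orders of the `f₀ ^ i` grow with `i`, so each `x`-coefficient of it is reached by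
a finite partial sum. The Jacobian has `y`-order at least `0` with constant term `f₀' * g₁`,
and the factors `g₁` cancel in the product.
-/

namespace HahnSeries

theorem order_eq_of_forall_lt {Γ R : Type*} [Zero Γ] [LinearOrder Γ] [Zero R]
    {x : HahnSeries Γ R} {a : Γ} (hxa : x.coeff a ≠ 0) (hx : ∀ i < a, x.coeff i = 0) :
    x.order = a := by
  have hx0 : x ≠ 0 := fun h => hxa (by simp [h])
  exact le_antisymm (order_le_of_coeff_ne_zero hxa)
    (not_lt.mp fun h => hx0 (coeff_order_eq_zero.mp (hx _ h)))

section OrderedMonoid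

variable {Γ R : Type*} [AddCommMonoid Γ] [LinearOrder Γ] [IsOrderedCancelAddMonoid Γ]
  [NonUnitalNonAssocSemiring R] {x y : HahnSeries Γ R} {a b : Γ}

theorem coeff_mul_eq_zero_of_lt (hx : ∀ i < a, x.coeff i = 0) (hy : ∀ j < b, y.coeff j = 0)
    {c : Γ} (hc : c < a + b) : (x * y).coeff c = 0 := by
  have hxa : (a : WithTop Γ) ≤ x.orderTop :=
    le_orderTop_iff_forall.mpr fun i hi => hx i (WithTop.coe_lt_coe.mp hi)
  have hyb : (b : WithTop Γ) ≤ y.orderTop :=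
    le_orderTop_iff_forall.mpr fun j hj => hy j (WithTop.coe_lt_coe.mp hj)
  refine coeff_eq_zero_of_lt_orderTop ?_
  calc (c : WithTop Γ) < a + b := WithTop.coe_lt_coe.mpr hc
    _ ≤ x.orderTop + y.orderTop := add_le_add hxa hyb
    _ ≤ (x * y).orderTop := orderTop_add_le_mul

theorem coeff_mul_add_of_forall_lt (hx : ∀ i < a, x.coeff i = 0)
    (hy : ∀ j < b, y.coeff j = 0) : (x * y).coeff (a + b) = x.coeff a * y.coeff b := by
  rw [coeff_mul]
  refine Finset.sum_eq_single (a, b) (fun ij hij hne => ?_) (fun hab => ?_)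
  · obtain ⟨hi, hj, hsum⟩ := Finset.mem_antidiagonal.mp hij
    have ha : a ≤ ij.1 := not_lt.mp fun h => hi (hx _ h)
    have hb : b ≤ ij.2 := not_lt.mp fun h => hj (hy _ h)
    have h1 : ij.1 = a := ha.eq_or_lt.elim Eq.symm fun h =>
      absurd hsum (add_lt_add_of_lt_of_le h hb).ne'
    rw [h1] at hsum
    exact absurd (Prod.ext h1 (add_left_cancel hsum)) hne
  · by_contra hab0
    exact hab (Finset.mem_antidiagonal.mpr
      ⟨left_ne_zero_of_mul hab0, right_ne_zero_of_mul hab0, rfl⟩)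

end OrderedMonoid

section Field

variable {Γ K : Type*} [AddCommGroup Γ] [LinearOrder Γ] [IsOrderedAddMonoid Γ] [Field K]
  (x : HahnSeries Γ K)

theorem order_inv : x⁻¹.order = -x.order := by
  obtain rfl | hx := eq_or_ne x 0
  · simp
  · have h := order_mul hx (inv_ne_zero hx)
    rw [mul_inv_cancel₀ hx, order_one] at h
    exact eq_neg_of_add_eq_zero_right h.symm

theorem order_zpow (n : ℤ) : (x ^ n).order = n • x.order := by
  cases n with
  | ofNat n => simp
  | negSucc n => rw [zpow_negSucc, order_inv, order_pow, negSucc_zsmul]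

noncomputable def leadingCoeffHom : HahnSeries Γ K →*₀ K where
  toFun := leadingCoeff
  map_zero' := leadingCoeff_zero
  map_one' := leadingCoeff_one
  map_mul' x y := leadingCoeff_mul x y

theorem coeff_zpow_order (n : ℤ) : (x ^ n).coeff (n • x.order) = x.coeff x.order ^ n := by
  rw [← order_zpow, ← leadingCoeff_eq, ← leadingCoeff_eq]
  show leadingCoeffHom (x ^ n) = leadingCoeffHom x ^ n
  exact map_zpow₀ _ x n

theorem coeff_zpow_eq_zero_of_lt (n : ℤ) {i : Γ} (hi : i < n • x.order) :
    (x ^ n).coeff i = 0 :=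
  coeff_eq_zero_of_lt_order (by rwa [order_zpow])

end Field

end HahnSeries

open HahnSeries

section Substitution

variable {k : Type*} [Field k]

noncomputable def zpowPartialSum (c u : LaurentSeries k) (n : ℕ) : LaurentSeries k :=
  ∑ i ∈ Finset.Icc (-(n : ℤ)) n, c.coeff i • u ^ i

noncomputable def substPartialSum (f g h : LaurentSeries (LaurentSeries k)) (n : ℕ) :
    LaurentSeries (LaurentSeries k) :=
  ∑ j ∈ Finset.Icc (-(n : ℤ)) n, ∑ i ∈ Finset.Icc (-(n : ℤ)) n,
    (h.coeff j).coeff i • (f ^ i * g ^ j)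

def TendstoCoeffwise (P : ℕ → LaurentSeries (LaurentSeries k))
    (F : LaurentSeries (LaurentSeries k)) : Prop :=
  ∀ d e : ℤ, ∃ N : ℕ, ∀ n : ℕ, N ≤ n → ((F - P n).coeff d).coeff e = 0

theorem coeff_zpowPartialSum_eq {c u : LaurentSeries k} (hu : u.order = 1) {n : ℕ} {d : ℤ}
    (hn : -(n : ℤ) ≤ min c.order 0) (hd : d ≤ n) :
    (zpowPartialSum c u n).coeff d =
      (∑ i ∈ Finset.Icc (min c.order 0) d, c.coeff i • u ^ i).coeff d := by
  rw [zpowPartialSum, coeff_sum, coeff_sum]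
  refine (Finset.sum_subset (fun i hi => ?_) fun i _ hi => ?_).symm
  · simp only [Finset.mem_Icc] at hi ⊢
    omega
  · rw [Finset.mem_Icc, not_and_or, not_le, not_le] at hi
    rcases hi with hi | hi
    · rw [coeff_smul, coeff_eq_zero_of_lt_order (lt_of_lt_of_le hi (min_le_left _ _)), zero_smul]
    · rw [coeff_smul, coeff_zpow_eq_zero_of_lt u i (by simpa [hu] using hi), smul_zero]

variable {f g : LaurentSeries (LaurentSeries k)}

theorem coeff_zpow_mul_zpow_eq_zero_of_lt (hf : f.order = 0) (hg : g.order = 1) (i : ℤ)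
    {j d : ℤ} (hd : d < j) : (f ^ i * g ^ j).coeff d = 0 := by
  refine coeff_mul_eq_zero_of_lt (a := 0) (b := j) (fun d hd => ?_) (fun d hd => ?_) (by simpa)
  · exact coeff_zpow_eq_zero_of_lt f i (by simpa [hf] using hd)
  · exact coeff_zpow_eq_zero_of_lt g j (by simpa [hg] using hd)

theorem coeff_zpow_mul_zpow_self (hf : f.order = 0) (hg : g.order = 1) (i j : ℤ) :
    (f ^ i * g ^ j).coeff j = f.coeff 0 ^ i * g.coeff 1 ^ j := by
  have hfi := coeff_zpow_order f i
  have hgj := coeff_zpow_order g j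
  rw [hf, smul_zero] at hfi
  rw [hg, smul_eq_mul, mul_one] at hgj
  have h := coeff_mul_add_of_forall_lt (a := 0) (b := j)
    (fun d hd => coeff_zpow_eq_zero_of_lt f i (by simpa [hf] using hd))
    (fun d hd => coeff_zpow_eq_zero_of_lt g j (by simpa [hg] using hd))
  rwa [zero_add, hfi, hgj] at h

variable {h : LaurentSeries (LaurentSeries k)} {m : ℤ}

theorem coeff_substPartialSum_eq_zero_of_lt (hf : f.order = 0) (hg : g.order = 1)
    (hh : ∀ j < m, h.coeff j = 0) (n : ℕ) {d : ℤ} (hd : d < m) :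
    (substPartialSum f g h n).coeff d = 0 := by
  rw [substPartialSum, coeff_sum]
  refine Finset.sum_eq_zero fun j _ => ?_
  rw [coeff_sum]
  refine Finset.sum_eq_zero fun i _ => ?_
  rcases lt_or_ge j m with hj | hj
  · simp [hh j hj]
  · rw [coeff_smul, coeff_zpow_mul_zpow_eq_zero_of_lt hf hg i (by omega), smul_zero]

theorem coeff_substPartialSum_self (hf : f.order = 0) (hg : g.order = 1)
    (hh : ∀ j < m, h.coeff j = 0) {n : ℕ} (hmn : m ∈ Finset.Icc (-(n : ℤ)) n) :
    (substPartialSum f g h n).coeff m =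
      zpowPartialSum (h.coeff m) (f.coeff 0) n * g.coeff 1 ^ m := by
  rw [substPartialSum, coeff_sum, Finset.sum_eq_single_of_mem m hmn fun j _ hjm => ?_]
  · simp only [coeff_sum, coeff_smul, coeff_zpow_mul_zpow_self hf hg, zpowPartialSum,
      Finset.sum_mul]
    refine Finset.sum_congr rfl fun i _ => ?_
    rw [← single_zero_mul_eq_smul, ← single_zero_mul_eq_smul, mul_assoc]
  · rw [coeff_sum]
    refine Finset.sum_eq_zero fun i _ => ?_
    rcases lt_or_gt_of_ne hjm with hj | hj
    · simp [hh j hj]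
    · rw [coeff_smul, coeff_zpow_mul_zpow_eq_zero_of_lt hf hg i hj, smul_zero]

variable {F : LaurentSeries (LaurentSeries k)}

theorem coeff_eq_zero_of_lt_of_tendsto_substPartialSum
    (hF : TendstoCoeffwise (substPartialSum f g h) F) (hf : f.order = 0) (hg : g.order = 1)
    (hh : ∀ j < m, h.coeff j = 0) {d : ℤ} (hd : d < m) : F.coeff d = 0 := by
  ext e
  obtain ⟨N, hN⟩ := hF d e
  simpa [coeff_substPartialSum_eq_zero_of_lt hf hg hh N hd] using hN N le_rfl

theorem coeff_eq_of_tendsto_substPartialSum (hF : TendstoCoeffwise (substPartialSum f g h) F)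
    (hf : f.order = 0) (hg : g.order = 1) (hf₀ : (f.coeff 0).order = 1)
    (hh : ∀ j < m, h.coeff j = 0) {s : LaurentSeries k}
    (hs : ∀ d : ℤ, s.coeff d = (∑ i ∈ Finset.Icc (min (h.coeff m).order 0) d,
      (h.coeff m).coeff i • f.coeff 0 ^ i).coeff d) :
    F.coeff m = s * g.coeff 1 ^ m := by
  ext e
  obtain ⟨N, hN⟩ := hF m e
  set t := m * (g.coeff 1).order
  -- `n` serves `hF`, contains `m`, and makes the partial sum of `h_m(f₀)` agree with `s`
  -- up to `e - t`
  set n : ℕ := N + m.natAbs + (min (h.coeff m).order 0).natAbs + (e - t).natAbs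
  have hFn := hN n (by omega)
  rw [coeff_sub, coeff_sub, sub_eq_zero, coeff_substPartialSum_self hf hg hh
    (Finset.mem_Icc.mpr ⟨by omega, by omega⟩)] at hFn
  rw [hFn, ← sub_eq_zero, ← coeff_sub, ← sub_mul]
  refine coeff_mul_eq_zero_of_lt (a := e - t + 1) (b := t) (fun d hd => ?_)
    (fun d hd => coeff_zpow_eq_zero_of_lt _ m hd) (by omega)
  rw [coeff_sub, hs, coeff_zpowPartialSum_eq hf₀ (by omega) (by omega), sub_self]

end Substitution

section Jacobian

variable {k : Type*} [Field k] {f g : LaurentSeries (LaurentSeries k)}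

theorem derivU_coeff (F : LaurentSeries (LaurentSeries k)) (j : ℤ) :
    (derivU F).coeff j = hahnDeriv (F.coeff j) :=
  rfl

theorem derivV_coeff (F : LaurentSeries (LaurentSeries k)) (j : ℤ) :
    (derivV F).coeff j = (j + 1) • F.coeff (j + 1) :=
  rfl

theorem derivU_coeff_eq_zero_of_lt {F : LaurentSeries (LaurentSeries k)} {a : ℤ}
    (hF : ∀ j < a, F.coeff j = 0) {j : ℤ} (hj : j < a) : (derivU F).coeff j = 0 := by
  rw [derivU_coeff, hF j hj, hahnDeriv_zero]

theorem derivV_coeff_eq_zero_of_neg {F : LaurentSeries (LaurentSeries k)}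
    (hF : ∀ j < 0, F.coeff j = 0) {j : ℤ} (hj : j < 0) : (derivV F).coeff j = 0 := by
  rw [derivV_coeff]
  rcases (show j + 1 < 0 ∨ j + 1 = 0 by omega) with hj | hj
  · rw [hF _ hj, smul_zero]
  · rw [hj, zero_smul]

theorem jacobian_coeff_eq_zero_of_neg (hf : ∀ j < 0, f.coeff j = 0)
    (hg : ∀ j < 1, g.coeff j = 0) {d : ℤ} (hd : d < 0) :
    (derivU f * derivV g - derivV f * derivU g).coeff d = 0 := by
  have hg' : ∀ j < 0, g.coeff j = 0 := fun j hj => hg j (by omega)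
  rw [coeff_sub, coeff_mul_eq_zero_of_lt (a := 0) (b := 0) (fun _ => derivU_coeff_eq_zero_of_lt hf)
      (fun _ => derivV_coeff_eq_zero_of_neg hg') (by simpa),
    coeff_mul_eq_zero_of_lt (a := 0) (b := 1) (fun _ => derivV_coeff_eq_zero_of_neg hf)
      (fun _ => derivU_coeff_eq_zero_of_lt hg) (by omega), sub_zero]

theorem jacobian_coeff_zero (hf : ∀ j < 0, f.coeff j = 0) (hg : ∀ j < 1, g.coeff j = 0) :
    (derivU f * derivV g - derivV f * derivU g).coeff 0 = hahnDeriv (f.coeff 0) * g.coeff 1 := by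
  have hg' : ∀ j < 0, g.coeff j = 0 := fun j hj => hg j (by omega)
  have hlead := coeff_mul_add_of_forall_lt (a := 0) (b := 0)
    (fun _ => derivU_coeff_eq_zero_of_lt hf) (fun _ => derivV_coeff_eq_zero_of_neg hg')
  rw [add_zero] at hlead
  rw [coeff_sub, hlead, coeff_mul_eq_zero_of_lt (a := 0) (b := 1)
      (fun _ => derivV_coeff_eq_zero_of_neg hf) (fun _ => derivU_coeff_eq_zero_of_lt hg) (by omega),
    sub_zero, derivU_coeff, derivV_coeff, zero_add, one_smul]

end Jacobian

theorem stmt_3_general (k : Type) [Field k]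
    (f g : LaurentSeries (LaurentSeries k))
    -- f ∈ k((x))[[y]] with y-constant term f₀ ∈ x·k[[x]] \ x²·k[[x]]
    (hf_pow : ∀ j : ℤ, j < 0 → f.coeff j = 0)
    (hf0_low : ∀ i : ℤ, i < 1 → (f.coeff 0).coeff i = 0)
    (hf0_one : (f.coeff 0).coeff 1 ≠ 0)
    -- g of y-adic order exactly 1
    (hg_low : ∀ j : ℤ, j < 1 → g.coeff j = 0)
    (hg_one : g.coeff 1 ≠ 0)
    -- φ is the termwise-substitution k-algebra homomorphism, u ↦ f, v ↦ g
    (φ : LaurentSeries (LaurentSeries k) →ₐ[k] LaurentSeries (LaurentSeries k))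
    (hφsubst : ∀ h : LaurentSeries (LaurentSeries k), ∀ d e : ℤ, ∃ N : ℕ, ∀ n : ℕ, N ≤ n →
      (((φ h - ∑ j ∈ Finset.Icc (-(n : ℤ)) (n : ℤ), ∑ i ∈ Finset.Icc (-(n : ℤ)) (n : ℤ),
          ((h.coeff j).coeff i) • (f ^ i * g ^ j)).coeff d).coeff e = 0))
    -- h has v-adic order at least −1
    (h : LaurentSeries (LaurentSeries k))
    (hh : ∀ j : ℤ, j < -1 → h.coeff j = 0)
    -- s = h₋₁(f₀), the substitution of f₀ into h₋₁ ∈ k((u))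
    (s : LaurentSeries k)
    (hs : ∀ d : ℤ,
      s.coeff d = (∑ i ∈ Finset.Icc (min (h.coeff (-1)).order 0) d,
        ((h.coeff (-1)).coeff i) • (f.coeff 0) ^ i).coeff d) :
    (φ h * (derivU f * derivV g - derivV f * derivU g)).coeff (-1) =
      s * hahnDeriv (f.coeff 0) := by
  have hf₀ : (f.coeff 0).order = 1 := order_eq_of_forall_lt hf0_one hf0_low
  have hf : f.order = 0 := order_eq_of_forall_lt (fun h0 => hf0_one (by simp [h0])) hf_pow
  have hg : g.order = 1 := order_eq_of_forall_lt hg_one hg_low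
  have hφh : ∀ d < -1, (φ h).coeff d = 0 := fun d =>
    coeff_eq_zero_of_lt_of_tendsto_substPartialSum (hφsubst h) hf hg hh
  have hlead := coeff_mul_add_of_forall_lt (a := -1) (b := 0) hφh
    fun d => jacobian_coeff_eq_zero_of_neg hf_pow hg_low
  rw [add_zero] at hlead
  rw [hlead, coeff_eq_of_tendsto_substPartialSum (hφsubst h) hf hg hf₀ hh hs,
    jacobian_coeff_zero hf_pow hg_low]
  field_simp

theorem stmt_3 (k : Type) [Field k]
    (f g : LaurentSeries (LaurentSeries k))
    -- f ∈ k((x))[[y]] with y-constant term f₀ ∈ x·k[[x]] \ x²·k[[x]]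
    (hf_pow : ∀ j : ℤ, j < 0 → f.coeff j = 0)
    (hf0_low : ∀ i : ℤ, i < 1 → (f.coeff 0).coeff i = 0)
    (hf0_one : (f.coeff 0).coeff 1 ≠ 0)
    -- g of y-adic order exactly 1
    (hg_low : ∀ j : ℤ, j < 1 → g.coeff j = 0)
    (hg_one : g.coeff 1 ≠ 0)
    -- φ is the termwise-substitution k-algebra homomorphism, u ↦ f, v ↦ g
    (φ : LaurentSeries (LaurentSeries k) →ₐ[k] LaurentSeries (LaurentSeries k))
    (hφu : φ (HahnSeries.single 0 (HahnSeries.single 1 1)) = f)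
    (hφv : φ (HahnSeries.single 1 1) = g)
    (hφsubst : ∀ h : LaurentSeries (LaurentSeries k), ∀ d e : ℤ, ∃ N : ℕ, ∀ n : ℕ, N ≤ n →
      (((φ h - ∑ j ∈ Finset.Icc (-(n : ℤ)) (n : ℤ), ∑ i ∈ Finset.Icc (-(n : ℤ)) (n : ℤ),
          ((h.coeff j).coeff i) • (f ^ i * g ^ j)).coeff d).coeff e = 0))
    -- h has v-adic order at least −1
    (h : LaurentSeries (LaurentSeries k))
    (hh : ∀ j : ℤ, j < -1 → h.coeff j = 0)
    -- s = h₋₁(f₀), the substitution of f₀ into h₋₁ ∈ k((u))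
    (s : LaurentSeries k)
    (hs : ∀ d : ℤ,
      s.coeff d = (∑ i ∈ Finset.Icc (min (h.coeff (-1)).order 0) d,
        ((h.coeff (-1)).coeff i) • (f.coeff 0) ^ i).coeff d) :
    (φ h * (derivU f * derivV g - derivV f * derivU g)).coeff (-1) =
      s * hahnDeriv (f.coeff 0) :=
  stmt_3_general k f g hf_pow hf0_low hf0_one hg_low hg_one φ hφsubst h hh s hs
end

section
/- Let k be a field (of arbitrary characteristic) and let A, B ∈ k((u))((v)). Define Jac(A,B) := (∂A/∂u)(∂B/∂v) − (∂A/∂v)(∂B/∂u) ∈ k((u))((v)). Then the coefficient of v^{−1} of Jac(A,B), which is an element of k((u)), is a formal derivative: there exists φ ∈ k((u)) such that this coefficient equals dφ/du. In particular, the coefficient of u^{−1} in the coefficient of v^{−1} of Jac(A,B) is zero, i.e., the two-codimensional residue of the formal 2-form dA∧dB in the coordinates (u,v) vanishes. -/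
/-!
By the Leibniz rule for both partial derivatives and the commutation `∂_u ∂_v = ∂_v ∂_u`,
`Jac(A, B) = ∂_u (A ∂_v B) - ∂_v (A ∂_u B)`. The `v⁻¹`-coefficient of any `∂_v`-derivative is
`0 • (v⁰-coefficient) = 0`, while `∂_u` acts coefficientwise, so the `v⁻¹`-coefficient of the
Jacobian is `d/du` of the `v⁻¹`-coefficient of `A ∂_v B`. The same factor `0` kills the
`u⁻¹`-coefficient of any `d/du`-derivative.
-/

section HahnDeriv

variable {V : Type*} [AddCommGroup V]

lemma coeff_hahnDeriv (h : HahnSeries ℤ V) (j : ℤ) :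
    (hahnDeriv h).coeff j = (j + 1) • h.coeff (j + 1) := rfl

lemma coeff_hahnDeriv_neg_one (h : HahnSeries ℤ V) : (hahnDeriv h).coeff (-1) = 0 := by
  rw [coeff_hahnDeriv, neg_add_cancel, zero_smul]

noncomputable def hahnDerivAddMonoidHom : HahnSeries ℤ V →+ HahnSeries ℤ V where
  toFun := hahnDeriv
  map_zero' := hahnDeriv_zero
  map_add' x y := by
    ext j
    simp only [coeff_hahnDeriv, HahnSeries.coeff_add, smul_add]

lemma hahnDeriv_sum {ι : Type*} (s : Finset ι) (f : ι → HahnSeries ℤ V) :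
    hahnDeriv (∑ i ∈ s, f i) = ∑ i ∈ s, hahnDeriv (f i) :=
  map_sum hahnDerivAddMonoidHom f s

lemma hahnDeriv_zsmul (n : ℤ) (h : HahnSeries ℤ V) : hahnDeriv (n • h) = n • hahnDeriv h :=
  map_zsmul hahnDerivAddMonoidHom n h

/-- The Euler operator `t d/dt`. Writing `d/dt = t⁻¹ (t d/dt)` with `t⁻¹` central, the Leibniz
rule for `d/dt` reduces to that of `t d/dt`, whose proof needs no reindexing of product sums. -/
def eulerOperator (h : HahnSeries ℤ V) : HahnSeries ℤ V where
  coeff j := j • h.coeff j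
  isPWO_support' := h.isPWO_support.mono (Function.support_smul_subset_right (fun j : ℤ => j) _)

lemma coeff_eulerOperator (h : HahnSeries ℤ V) (j : ℤ) :
    (eulerOperator h).coeff j = j • h.coeff j := rfl

lemma support_eulerOperator_subset (h : HahnSeries ℤ V) :
    (eulerOperator h).support ⊆ h.support :=
  Function.support_smul_subset_right (fun j : ℤ => j) _

end HahnDeriv

section Leibniz

variable {R : Type*} [Ring R]

lemma eulerOperator_mul (x y : HahnSeries ℤ R) :
    eulerOperator (x * y) = eulerOperator x * y + x * eulerOperator y := by
  ext n
  rw [HahnSeries.coeff_add, coeff_eulerOperator, HahnSeries.coeff_mul,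
    HahnSeries.coeff_mul_left' x.isPWO_support (support_eulerOperator_subset x),
    HahnSeries.coeff_mul_right' y.isPWO_support (support_eulerOperator_subset y),
    Finset.smul_sum, ← Finset.sum_add_distrib]
  refine Finset.sum_congr rfl fun ⟨a, b⟩ hab => ?_
  rw [(Finset.mem_antidiagonal.mp hab).2.2.symm, coeff_eulerOperator, coeff_eulerOperator,
    add_smul, smul_mul_assoc, mul_smul_comm]

lemma single_neg_one_mul_comm (x : HahnSeries ℤ R) :
    HahnSeries.single (-1) (1 : R) * x = x * HahnSeries.single (-1) 1 := by
  ext j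
  rw [HahnSeries.coeff_single_mul, HahnSeries.coeff_mul_single, one_mul, mul_one]

lemma hahnDeriv_eq_single_mul_eulerOperator (x : HahnSeries ℤ R) :
    hahnDeriv x = HahnSeries.single (-1) 1 * eulerOperator x := by
  ext j
  rw [HahnSeries.coeff_single_mul, one_mul, coeff_eulerOperator, coeff_hahnDeriv, sub_neg_eq_add]

lemma hahnDeriv_mul (x y : HahnSeries ℤ R) :
    hahnDeriv (x * y) = hahnDeriv x * y + x * hahnDeriv y := by
  simp only [hahnDeriv_eq_single_mul_eulerOperator, eulerOperator_mul, mul_add, ← mul_assoc,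
    single_neg_one_mul_comm x]

end Leibniz

section PartialDerivatives

variable {k : Type*} [Field k]

lemma coeff_derivU (h : LaurentSeries (LaurentSeries k)) (j : ℤ) :
    (derivU h).coeff j = hahnDeriv (h.coeff j) := rfl

lemma support_derivU_subset (h : LaurentSeries (LaurentSeries k)) :
    (derivU h).support ⊆ h.support := fun j hj h0 =>
  hj (by rw [coeff_derivU, h0, hahnDeriv_zero])

lemma derivU_mul (x y : LaurentSeries (LaurentSeries k)) :
    derivU (x * y) = derivU x * y + x * derivU y := by
  refine HahnSeries.ext <| funext fun j => ?_
  rw [HahnSeries.coeff_add, coeff_derivU, HahnSeries.coeff_mul,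
    HahnSeries.coeff_mul_left' x.isPWO_support (support_derivU_subset x),
    HahnSeries.coeff_mul_right' y.isPWO_support (support_derivU_subset y),
    ← Finset.sum_add_distrib, hahnDeriv_sum]
  exact Finset.sum_congr rfl fun (ij : ℤ × ℤ) _ => hahnDeriv_mul (x.coeff ij.1) (y.coeff ij.2)

lemma derivV_mul (x y : LaurentSeries (LaurentSeries k)) :
    derivV (x * y) = derivV x * y + x * derivV y :=
  hahnDeriv_mul x y

lemma derivU_derivV_comm (h : LaurentSeries (LaurentSeries k)) :
    derivU (derivV h) = derivV (derivU h) :=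
  HahnSeries.ext <| funext fun j => hahnDeriv_zsmul (j + 1) (h.coeff (j + 1))

end PartialDerivatives

theorem stmt_4 (k : Type) [Field k] (A B : LaurentSeries (LaurentSeries k)) :
    (∃ φ : LaurentSeries k,
      (derivU A * derivV B - derivV A * derivU B).coeff (-1) = hahnDeriv φ) ∧
    ((derivU A * derivV B - derivV A * derivU B).coeff (-1)).coeff (-1) = 0 := by
  have jacobian_eq : derivU A * derivV B - derivV A * derivU B
      = derivU (A * derivV B) - derivV (A * derivU B) := by
    rw [derivU_mul, derivV_mul, derivU_derivV_comm B]
    abel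
  have residue_v : (derivU A * derivV B - derivV A * derivU B).coeff (-1)
      = hahnDeriv ((A * derivV B).coeff (-1)) := by
    rw [jacobian_eq, HahnSeries.coeff_sub, derivV, coeff_hahnDeriv_neg_one, sub_zero,
      coeff_derivU]
  exact ⟨⟨_, residue_v⟩, by rw [residue_v, coeff_hahnDeriv_neg_one]⟩
end

section
/- Let R be a complete discrete valuation ring containing a field k, with maximal ideal m and residue field K = R/m, and let u ∈ R be an element whose residue ū ∈ K is transcendental over k and such that K is a finite separable extension of the subfield k(ū) generated by k and ū. Then there exists a unique subfield L of R containing k and u such that the quotient map R → K restricts to an isomorphism of L onto K. Moreover, this field L is generated over k(u) by a single element y ∈ R. -/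
/-!
Every nonzero polynomial in `u` over `k` is a unit of `R`, so `X ↦ u` extends from
`k(X) ≅ k(ū)` to an embedding `ψ : k(ū) → R` lifting the inclusion into `K`; its image lies in
every subfield of `R` containing `k` and `u`. Over `k(ū)` the residue field is generated by a
primitive element whose minimal polynomial `f` is separable, so Hensel's lemma in the complete
ring `R` lifts it to a root `y` of `f`, which yields a `k(ū)`-algebra section `K → R` of the
residue map with image `k(u)[y]`. Any coefficient field contains `ψ(k(ū))`, so it is the image
of another such section, and two sections coincide: they send the primitive element to roots of `f`
with the same residue, and a simple root of `f` modulo `m` has only one lift.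
-/

/-- `L` is a subfield of `R` containing (the image of) `k` and `u`, mapped
isomorphically onto the residue field by the quotient map. -/
def IsCoeffField (k : Type*) (R : Type*) [Field k] [CommRing R] [IsLocalRing R]
    [Algebra k R] (u : R) (L : Subring R) : Prop :=
  IsField L ∧ (∀ c : k, algebraMap k R c ∈ L) ∧ u ∈ L ∧
    Function.Bijective (fun x : L => IsLocalRing.residue R (x : R))

open Polynomial IsLocalRing IntermediateField

theorem Subring.mem_of_mul_eq_one {A : Type*} [CommRing A] {L : Subring A} (hL : IsField L)
    {x y : A} (hx : x ∈ L) (hxy : x * y = 1) : y ∈ L := by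
  by_cases hx0 : (⟨x, hx⟩ : L) = 0
  · have h10 : (1 : A) = 0 := by rw [← hxy, show x = 0 from congrArg Subtype.val hx0, zero_mul]
    have hy0 : y = 0 := by rw [← mul_one y, h10, mul_zero]
    exact hy0 ▸ L.zero_mem
  · obtain ⟨z, hz⟩ := hL.mul_inv_cancel hx0
    have hxz : x * z = 1 := congrArg Subtype.val hz
    rw [left_inv_eq_right_inv (show y * x = 1 by rwa [mul_comm]) hxz]
    exact z.2

theorem Subring.isField_of_bijective {R K : Type*} [CommRing R] [Field K] (f : R →+* K)
    {M : Subring R} (hM : Function.Bijective fun x : M => f x) : IsField M :=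
  MulEquiv.isField (Field.toIsField K) (RingEquiv.ofBijective (f.comp M.subtype) hM).toMulEquiv

theorem AlgHom.bijective_range_of_leftInverse {B R K : Type*} [CommSemiring B] [Semiring R]
    [Semiring K] [Algebra B R] [Algebra B K] {f : R → K} {φ : K →ₐ[B] R}
    (hφ : Function.LeftInverse f φ) : Function.Bijective fun x : φ.range => f x := by
  refine ⟨?_, fun a => ⟨⟨φ a, a, rfl⟩, hφ a⟩⟩
  rintro ⟨_, a, rfl⟩ ⟨_, b, rfl⟩ h
  obtain rfl : a = b := (hφ a).symm.trans (h.trans (hφ b))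
  rfl

theorem IntermediateField.algHom_apply_mem_of_isField {F E A : Type*} [Field F] [Field E]
    [Algebra F E] [CommRing A] [Algebra F A] {α : E} (ψ : F⟮α⟯ →ₐ[F] A) {L : Subring A}
    (hL : IsField L) (hF : ∀ c, algebraMap F A c ∈ L) (hα : ψ (AdjoinSimple.gen F α) ∈ L)
    (b : F⟮α⟯) : ψ b ∈ L := by
  obtain ⟨b, hb⟩ := b
  induction hb using adjoin_induction with
  | mem x hx =>
    obtain rfl : x = α := hx
    exact hα
  | algebraMap c => exact (ψ.commutes c).symm ▸ hF c
  | add x y hx hy ihx ihy => exact (map_add ψ ⟨x, hx⟩ ⟨y, hy⟩).symm ▸ L.add_mem ihx ihy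
  | mul x y hx hy ihx ihy => exact (map_mul ψ ⟨x, hx⟩ ⟨y, hy⟩).symm ▸ L.mul_mem ihx ihy
  | inv x hx ih =>
    by_cases hx0 : x = 0
    · have h0 : (⟨x⁻¹, inv_mem hx⟩ : F⟮α⟯) = 0 := Subtype.ext (by simp [hx0])
      rw [h0, map_zero]
      exact L.zero_mem
    · refine L.mem_of_mul_eq_one hL ih ?_
      rw [← map_mul, ← map_one ψ]
      congr 1
      exact Subtype.ext (mul_inv_cancel₀ hx0)

section TranscendentalResidue

variable {k R : Type*} [Field k] [CommRing R] [IsLocalRing R] [Algebra k R] {u : R}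

theorem isUnit_aeval_of_transcendental_residue (htrans : Transcendental k (residue R u))
    {p : k[X]} (hp : p ≠ 0) : IsUnit (aeval u p) := by
  rw [← residue_ne_zero_iff_isUnit, ← ResidueField.algebraMap_eq, ← aeval_algebraMap_apply]
  exact fun h => hp (transcendental_iff.mp htrans p h)

theorem exists_algHom_adjoin_residue (htrans : Transcendental k (residue R u)) :
    ∃ ψ : k⟮residue R u⟯ →ₐ[k] R, ψ (AdjoinSimple.gen k (residue R u)) = u := by
  let ψ₀ : RatFunc k →ₐ[k] R :=
    IsLocalization.liftAlgHom (M := nonZeroDivisors k[X]) (f := aeval u) fun p =>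
      isUnit_aeval_of_transcendental_residue htrans (nonZeroDivisors.ne_zero p.2)
  refine ⟨ψ₀.comp (RatFunc.algEquivOfTranscendental _ htrans).symm.toAlgHom, ?_⟩
  simp [ψ₀, ← RatFunc.algebraMap_X]

theorem residue_algHom_adjoin_residue {ψ : k⟮residue R u⟯ →ₐ[k] R}
    (hψ : ψ (AdjoinSimple.gen k (residue R u)) = u) (b : k⟮residue R u⟯) :
    residue R (ψ b) = b := by
  suffices (IsScalarTower.toAlgHom k R (ResidueField R)).comp ψ = val _ from
    AlgHom.congr_fun this b
  refine adjoin_algHom_ext k fun x hx => ?_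
  obtain rfl : x = residue R u := hx
  exact congrArg (residue R) hψ

end TranscendentalResidue

namespace IsLocalRing

open Function

variable {R K : Type*} [CommRing R] [IsLocalRing R] [Field K] [Algebra R K]

theorem isUnit_iff_algebraMap_ne_zero (hK : Surjective (algebraMap R K)) {x : R} :
    IsUnit x ↔ algebraMap R K x ≠ 0 := by
  rw [← notMem_maximalIdeal, ← ker_eq_maximalIdeal _ hK, RingHom.mem_ker]

variable {B : Type*} [Field B] [Algebra B R] [Algebra B K] [IsScalarTower B R K]

theorem isUnit_aeval_derivative_minpoly (hK : Surjective (algebraMap R K)) {α : K}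
    (hα : IsSeparable B α) {x : R} (hx : algebraMap R K x = α) :
    IsUnit (aeval x (derivative (minpoly B α))) := by
  rw [isUnit_iff_algebraMap_ne_zero hK, ← aeval_algebraMap_apply, hx]
  exact hα.aeval_derivative_ne_zero (minpoly.aeval B α)

theorem eq_of_aeval_minpoly_eq_zero (hK : Surjective (algebraMap R K)) {α : K}
    (hα : IsSeparable B α) {x y : R} (hx : aeval x (minpoly B α) = 0)
    (hy : aeval y (minpoly B α) = 0) (hxα : algebraMap R K x = α)
    (hyα : algebraMap R K y = α) : x = y := by
  refine eq_of_eval_eq_zero_of_not_isUnit_sub (f := (minpoly B α).map (algebraMap B R))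
    (by rwa [eval_map_algebraMap]) (by rwa [eval_map_algebraMap]) ?_ ?_
  · rw [isUnit_iff_algebraMap_ne_zero hK, not_not, map_sub, hxα, hyα, sub_self]
  · rw [derivative_map, eval_map_algebraMap]
    exact isUnit_aeval_derivative_minpoly hK hα hxα

theorem exists_aeval_minpoly_eq_zero [HenselianRing R (maximalIdeal R)]
    (hK : Surjective (algebraMap R K)) {α : K} (hα : IsSeparable B α) :
    ∃ y : R, aeval y (minpoly B α) = 0 ∧ algebraMap R K y = α := by
  obtain ⟨a₀, rfl⟩ := hK α
  have hmem : ∀ x : R, x ∈ maximalIdeal R ↔ algebraMap R K x = 0 := fun x => by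
    rw [← ker_eq_maximalIdeal _ hK, RingHom.mem_ker]
  obtain ⟨y, hy, hya₀⟩ := HenselianRing.is_henselian (I := maximalIdeal R)
    ((minpoly B (algebraMap R K a₀)).map (algebraMap B R)) ((minpoly.monic hα.isIntegral).map _)
    a₀ (by rw [eval_map_algebraMap, hmem, ← aeval_algebraMap_apply]; exact minpoly.aeval B _)
    (by rw [derivative_map, eval_map_algebraMap]
        exact (isUnit_aeval_derivative_minpoly hK hα rfl).map _)
  refine ⟨y, by rwa [IsRoot, eval_map_algebraMap] at hy, ?_⟩
  rwa [← sub_eq_zero, ← map_sub, ← hmem]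

variable [FiniteDimensional B K] [Algebra.IsSeparable B K]

theorem algHom_ext_of_leftInverse_algebraMap (hK : Surjective (algebraMap R K))
    {φ₁ φ₂ : K →ₐ[B] R} (h₁ : LeftInverse (algebraMap R K) φ₁)
    (h₂ : LeftInverse (algebraMap R K) φ₂) : φ₁ = φ₂ := by
  let pb := Field.powerBasisOfFiniteOfSeparable B K
  refine pb.algHom_ext (eq_of_aeval_minpoly_eq_zero hK (Algebra.IsSeparable.isSeparable B pb.gen)
    ?_ ?_ (h₁ _) (h₂ _)) <;>
  rw [aeval_algHom_apply, minpoly.aeval, map_zero]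

theorem exists_algHom_leftInverse_algebraMap [HenselianRing R (maximalIdeal R)]
    (hK : Surjective (algebraMap R K)) :
    ∃ φ : K →ₐ[B] R, LeftInverse (algebraMap R K) φ := by
  let pb := Field.powerBasisOfFiniteOfSeparable B K
  obtain ⟨y, hy, hyα⟩ :=
    exists_aeval_minpoly_eq_zero hK (Algebra.IsSeparable.isSeparable B pb.gen)
  have h : (IsScalarTower.toAlgHom B R K).comp (pb.lift y hy) = AlgHom.id B K :=
    pb.algHom_ext (by simpa [pb.lift_gen] using hyα)
  exact ⟨pb.lift y hy, AlgHom.congr_fun h⟩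

theorem eq_range_of_bijective_algebraMap (hK : Surjective (algebraMap R K)) {φ : K →ₐ[B] R}
    (hφ : LeftInverse (algebraMap R K) φ) {M : Subalgebra B R}
    (hM : Bijective fun x : M => algebraMap R K x) : M = φ.range := by
  let e : M ≃ₐ[B] K := AlgEquiv.ofBijective ((IsScalarTower.toAlgHom B R K).comp M.val) hM
  have hσ : M.val.comp e.symm.toAlgHom = φ :=
    algHom_ext_of_leftInverse_algebraMap hK (fun a => e.apply_symm_apply a) hφ
  rw [← hσ, AlgHom.range_comp, (AlgHom.range_eq_top _).mpr e.symm.surjective, Algebra.map_top,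
    Subalgebra.range_val]

end IsLocalRing

theorem AlgHom.range_eq_adjoin_singleton {R A C : Type*} [CommSemiring R] [Semiring A]
    [Semiring C] [Algebra R A] [Algebra R C] {α : A} (hα : Algebra.adjoin R {α} = ⊤)
    (φ : A →ₐ[R] C) : φ.range = Algebra.adjoin R {φ α} := by
  rw [← Algebra.map_top, ← hα, AlgHom.map_adjoin_singleton]

theorem stmt_5 (k R : Type*) [Field k] [CommRing R] [IsDomain R]
    [IsDiscreteValuationRing R] [Algebra k R]
    -- R is complete for the m-adic topology
    [IsAdicComplete (IsLocalRing.maximalIdeal R) R]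
    (u : R)
    -- the residue ū of u is transcendental over k
    (htrans : Transcendental k (IsLocalRing.residue R u))
    -- the residue field K is a finite separable extension of k(ū)
    (hfin : FiniteDimensional
      (IntermediateField.adjoin k {IsLocalRing.residue R u})
      (IsLocalRing.ResidueField R))
    (hsep : Algebra.IsSeparable
      (IntermediateField.adjoin k {IsLocalRing.residue R u})
      (IsLocalRing.ResidueField R)) :
    (∃! L : Subring R, IsCoeffField k R u L) ∧
    (∀ L : Subring R, IsCoeffField k R u L → ∃ y ∈ L,
      ∀ L' : Subring R, IsField L' → (∀ c : k, algebraMap k R c ∈ L') →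
        u ∈ L' → y ∈ L' → L ≤ L') := by
  set B := k⟮residue R u⟯
  obtain ⟨ψ, hψu⟩ := exists_algHom_adjoin_residue htrans
  let _ : Algebra B R := ψ.toAlgebra
  have : IsScalarTower B R (ResidueField R) :=
    .of_algebraMap_eq fun b => (residue_algHom_adjoin_residue hψu b).symm
  have hres : Function.Surjective (algebraMap R (ResidueField R)) := residue_surjective
  obtain ⟨φ, hφ⟩ := exists_algHom_leftInverse_algebraMap (B := B) hres
  have hB (M : Subring R) (hM : IsField M) (hk : ∀ c, algebraMap k R c ∈ M) (hu : u ∈ M) :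
      ∀ b : B, algebraMap B R b ∈ M :=
    algHom_apply_mem_of_isField ψ hM hk (by rwa [hψu])
  have huniq (M : Subring R) : IsCoeffField k R u M → M = φ.range.toSubring := by
    rintro ⟨hMf, hk, hu, hbij⟩
    exact congrArg Subalgebra.toSubring <| eq_range_of_bijective_algebraMap hres hφ
      (M := { M with algebraMap_mem' := hB M hMf hk hu }) hbij
  have hL : IsCoeffField k R u φ.range.toSubring := by
    have hbij := φ.bijective_range_of_leftInverse hφ
    refine ⟨Subring.isField_of_bijective (residue R) hbij, fun c => ?_, ?_, hbij⟩
    · rw [← ψ.commutes c]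
      exact φ.range.algebraMap_mem (algebraMap k B c)
    · rw [← hψu]
      exact φ.range.algebraMap_mem _
  obtain ⟨α, hα⟩ : ∃ α : ResidueField R, Algebra.adjoin B {α} = ⊤ :=
    ⟨_, (Field.powerBasisOfFiniteOfSeparable B _).adjoin_gen_eq_top⟩
  refine ⟨⟨_, hL, huniq⟩, fun M hM => ?_⟩
  rw [huniq M hM]
  refine ⟨φ α, ⟨α, rfl⟩, fun L' hL' hk hu hy => ?_⟩
  rw [φ.range_eq_adjoin_singleton hα]
  exact Algebra.adjoin_le (S := { L' with algebraMap_mem' := hB L' hL' hk hu })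
    (Set.singleton_subset_iff.mpr hy)
end

section
/- Let R be a complete discrete valuation ring containing a field k, with maximal ideal m and residue field K = R/m, let u ∈ R have residue ū transcendental over k with K a finite separable extension of k(ū), and let L ⊆ R be the unique subfield containing k and u that maps isomorphically onto K under the quotient map. Let v be a uniformizing parameter of R (a generator of m). Then every element f ∈ R has a unique expansion f = Σ_{j≥0} a_j v^j with all a_j ∈ L, convergent for the m-adic topology; equivalently, the natural map from the power series ring L[[T]] to R sending Σ a_j T^j to the (m-adically convergent) sum Σ a_j v^j is a ring isomorphism. -/
/-!
Digits are read off one at a time: a coefficient set `L`, mapping bijectively onto `R ⧸ (v)`,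
lets one write any `r` as `x + v q` with `x ∈ L`, and iterating this on the quotient `q` gives
`f = ∑_{j<n} a_j v^j + v^n g_n`. Uniqueness holds because two expansions agreeing below `n`
differ in the `n`-th term by `(b_n - a_n) v^n ∈ (v^{n+1})`; cancelling the regular element
`v^n` puts `b_n - a_n` in `(v)`, so `a_n = b_n` by injectivity of `L → R ⧸ (v)`.
-/

open Finset

section DigitExpansion

variable {R A : Type*} [CommRing R] {v : R} {ι : A → R}

theorem mul_pow_mem_span_pow_succ_iff (hv : IsRegular v) (x : R) (n : ℕ) :
    x * v ^ n ∈ Ideal.span {v} ^ (n + 1) ↔ x ∈ Ideal.span {v} := by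
  simp only [Ideal.span_singleton_pow, Ideal.mem_span_singleton']
  refine ⟨fun ⟨c, hc⟩ => ⟨c, (hv.pow n).right ?_⟩, fun ⟨c, hc⟩ => ⟨c, by rw [← hc]; ring⟩⟩
  simp only [← hc, pow_succ]
  ring

theorem exists_eq_add_mul_of_surjective
    (hι : Function.Surjective (Ideal.Quotient.mk (Ideal.span {v}) ∘ ι)) (r : R) :
    ∃ x q, r = ι x + v * q := by
  obtain ⟨x, hx⟩ := hι (Ideal.Quotient.mk _ r)
  obtain ⟨q, hq⟩ := Ideal.mem_span_singleton'.mp (Ideal.Quotient.eq.mp hx.symm)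
  exact ⟨x, q, by linear_combination -hq⟩

theorem exists_sub_sum_mem_span_pow
    (hι : Function.Surjective (Ideal.Quotient.mk (Ideal.span {v}) ∘ ι)) (f : R) :
    ∃ a : ℕ → A, ∀ n, f - ∑ j ∈ range n, ι (a j) * v ^ j ∈ Ideal.span {v} ^ n := by
  choose digit quot hdigit using exists_eq_add_mul_of_surjective hι
  let rem : ℕ → R := fun n => quot^[n] f
  have hrem : ∀ n, f - ∑ j ∈ range n, ι (digit (rem j)) * v ^ j = v ^ n * rem n := by
    intro n
    induction n with
    | zero => simp [rem]
    | succ n ih =>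
      rw [sum_range_succ, show rem (n + 1) = quot (rem n) from Function.iterate_succ_apply' ..]
      linear_combination ih + v ^ n * hdigit (rem n)
  refine ⟨fun j => digit (rem j), fun n => ?_⟩
  rw [hrem, Ideal.span_singleton_pow]
  exact Ideal.mem_span_singleton_self _ |> Ideal.mul_mem_right _ _

theorem eq_of_sub_sum_mem_span_pow (hv : IsRegular v)
    (hι : Function.Injective (Ideal.Quotient.mk (Ideal.span {v}) ∘ ι)) {f : R} {a b : ℕ → A}
    (ha : ∀ n, f - ∑ j ∈ range n, ι (a j) * v ^ j ∈ Ideal.span {v} ^ n)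
    (hb : ∀ n, f - ∑ j ∈ range n, ι (b j) * v ^ j ∈ Ideal.span {v} ^ n) : a = b := by
  funext n
  induction n using Nat.strong_induction_on with
  | _ n ih =>
    have hlow : ∑ j ∈ range n, ι (a j) * v ^ j = ∑ j ∈ range n, ι (b j) * v ^ j :=
      sum_congr rfl fun j hj => by rw [ih j (mem_range.mp hj)]
    have hdiff : (ι (b n) - ι (a n)) * v ^ n ∈ Ideal.span {v} ^ (n + 1) := by
      convert Ideal.sub_mem _ (ha (n + 1)) (hb (n + 1)) using 1
      rw [sum_range_succ, sum_range_succ, hlow]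
      ring
    rw [mul_pow_mem_span_pow_succ_iff hv] at hdiff
    exact hι (Ideal.Quotient.eq.mpr hdiff).symm

theorem existsUnique_sub_sum_mem_span_pow (hv : IsRegular v)
    (hι : Function.Bijective (Ideal.Quotient.mk (Ideal.span {v}) ∘ ι)) (f : R) :
    ∃! a : ℕ → A, ∀ n, f - ∑ j ∈ range n, ι (a j) * v ^ j ∈ Ideal.span {v} ^ n := by
  obtain ⟨a, ha⟩ := exists_sub_sum_mem_span_pow hι.2 f
  exact ⟨a, ha, fun b hb => eq_of_sub_sum_mem_span_pow hv hι.1 hb ha⟩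

end DigitExpansion

theorem stmt_6_general (R : Type*) [CommRing R] [IsDomain R]
    [IsDiscreteValuationRing R]
    -- L is the coefficient subfield: a subfield of R containing k and u, mapped
    -- isomorphically onto the residue field by the quotient map
    (L : Subring R)
    (hLres : Function.Bijective (fun x : L => IsLocalRing.residue R (x : R)))
    -- v is a uniformizing parameter of R
    (v : R)
    (hv : IsLocalRing.maximalIdeal R = Ideal.span {v}) :
    ∀ f : R, ∃! a : ℕ → L,
      ∀ n : ℕ, f - ∑ j ∈ Finset.range n, (a j : R) * v ^ j ∈
        (IsLocalRing.maximalIdeal R) ^ n := by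
  have hv0 : v ≠ 0 := by
    rintro rfl
    exact IsDiscreteValuationRing.not_a_field R (by rw [hv, Ideal.span_singleton_eq_bot])
  change Function.Bijective (fun x : L => Ideal.Quotient.mk (IsLocalRing.maximalIdeal R) (x : R))
    at hLres
  rw [hv] at hLres ⊢
  exact existsUnique_sub_sum_mem_span_pow (IsRegular.of_ne_zero hv0) hLres

theorem stmt_6 (k R : Type*) [Field k] [CommRing R] [IsDomain R]
    [IsDiscreteValuationRing R] [Algebra k R]
    -- R is complete for the m-adic topology
    [IsAdicComplete (IsLocalRing.maximalIdeal R) R]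
    (u : R)
    -- the residue ū of u is transcendental over k
    (htrans : Transcendental k (IsLocalRing.residue R u))
    -- the residue field K is a finite separable extension of k(ū)
    (hfin : FiniteDimensional
      (IntermediateField.adjoin k {IsLocalRing.residue R u})
      (IsLocalRing.ResidueField R))
    (hsep : Algebra.IsSeparable
      (IntermediateField.adjoin k {IsLocalRing.residue R u})
      (IsLocalRing.ResidueField R))
    -- L is the coefficient subfield: a subfield of R containing k and u, mapped
    -- isomorphically onto the residue field by the quotient map
    (L : Subring R)
    (hLfield : IsField L)
    (hLk : ∀ c : k, algebraMap k R c ∈ L)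
    (hLu : u ∈ L)
    (hLres : Function.Bijective (fun x : L => IsLocalRing.residue R (x : R)))
    -- v is a uniformizing parameter of R
    (v : R)
    (hv : IsLocalRing.maximalIdeal R = Ideal.span {v}) :
    ∀ f : R, ∃! a : ℕ → L,
      ∀ n : ℕ, f - ∑ j ∈ Finset.range n, (a j : R) * v ^ j ∈
        (IsLocalRing.maximalIdeal R) ^ n :=
  stmt_6_general R L hLres v hv
end

section
/- Let k be a field. There exists an injective k-algebra homomorphism from the fraction field of the formal power series ring k[[u,v]] in two variables into the iterated Laurent series field k((u))((v)), which sends u to u and v to v, and which maps the subring k[[u,v]] into the subring k((u))[[v]]. -/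
/-!
Regrouping coefficients identifies `k[[u,v]]` with `k[[u]][[v]]`, which embeds coefficientwise
into `k((u))[[v]] ⊆ k((u))((v))`. The composite is an injective ring map from a domain into a
field, so it extends uniquely to the fraction field.
-/

namespace MvPowerSeries

variable (R : Type*) [CommSemiring R]

/-- `R[[u, v]] ≃ R[[u]][[v]]` with `u = X 0` the inner and `v = X 1` the outer variable. -/
noncomputable def finTwoEquiv : MvPowerSeries (Fin 2) R ≃ₐ[R] PowerSeries (PowerSeries R) :=
  (renameEquiv R (finSuccEquivLast.trans (Equiv.optionCongr (Equiv.equivPUnit (Fin 1))))).trans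
    (optionEquivLeft PUnit R)

variable {R}

@[simp]
theorem finTwoEquiv_X_zero : finTwoEquiv R (X 0) = PowerSeries.C PowerSeries.X := by
  have : finSuccEquivLast (0 : Fin 2) = some 0 := rfl
  simp [finTwoEquiv, this]
  rfl

@[simp]
theorem finTwoEquiv_X_one : finTwoEquiv R (X 1) = PowerSeries.X := by
  have : finSuccEquivLast (1 : Fin 2) = none := rfl
  simp [finTwoEquiv, this]

@[simp]
theorem finTwoEquiv_C (r : R) : finTwoEquiv R (C r) = PowerSeries.C (PowerSeries.C r) := by
  simp [finTwoEquiv]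
  rfl

end MvPowerSeries

namespace PowerSeries

open HahnSeries

variable (R : Type*) [Semiring R]

noncomputable def toIteratedLaurentSeries :
    PowerSeries (PowerSeries R) →+* LaurentSeries (LaurentSeries R) :=
  (ofPowerSeries ℤ (LaurentSeries R)).comp (map (ofPowerSeries ℤ R))

variable {R}

theorem toIteratedLaurentSeries_injective : Function.Injective (toIteratedLaurentSeries R) := by
  rw [toIteratedLaurentSeries, RingHom.coe_comp]
  exact ofPowerSeries_injective.comp (map_injective _ ofPowerSeries_injective)

theorem coeff_toIteratedLaurentSeries_of_neg (f : PowerSeries (PowerSeries R)) {j : ℤ}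
    (hj : j < 0) : (toIteratedLaurentSeries R f).coeff j = 0 := by
  rw [toIteratedLaurentSeries, RingHom.comp_apply, ofPowerSeries_apply]
  refine embDomain_of_notMem_range fun ⟨n, hn⟩ => ?_
  have : (n : ℤ) = j := hn
  omega

@[simp]
theorem toIteratedLaurentSeries_C_C (r : R) :
    toIteratedLaurentSeries R (C (C r)) = HahnSeries.C (HahnSeries.C r) := by
  simp [toIteratedLaurentSeries]

@[simp]
theorem toIteratedLaurentSeries_C_X :
    toIteratedLaurentSeries R (C X) = single 0 (single 1 1) := by
  simp [toIteratedLaurentSeries]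

@[simp]
theorem toIteratedLaurentSeries_X : toIteratedLaurentSeries R X = single 1 1 := by
  simp [toIteratedLaurentSeries]

end PowerSeries

theorem LaurentSeries.algebraMap_laurentSeries_apply (R : Type*) [CommSemiring R] (r : R) :
    algebraMap R (LaurentSeries (LaurentSeries R)) r = HahnSeries.C (HahnSeries.C r) := by
  simp [HahnSeries.algebraMap_apply', PowerSeries.algebraMap_apply]

theorem stmt_8 (k : Type*) [Field k] :
    ∃ φ : FractionRing (MvPowerSeries (Fin 2) k) →+* LaurentSeries (LaurentSeries k),
      Function.Injective φ ∧
      -- φ is a k-algebra homomorphism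
      (∀ c : k,
        φ (algebraMap (MvPowerSeries (Fin 2) k) (FractionRing (MvPowerSeries (Fin 2) k))
            (MvPowerSeries.C (σ := Fin 2) (R := k) c)) =
          algebraMap k (LaurentSeries (LaurentSeries k)) c) ∧
      -- φ sends u to u and v to v
      φ (algebraMap (MvPowerSeries (Fin 2) k) (FractionRing (MvPowerSeries (Fin 2) k))
          (MvPowerSeries.X 0)) = HahnSeries.single 0 (HahnSeries.single 1 1) ∧
      φ (algebraMap (MvPowerSeries (Fin 2) k) (FractionRing (MvPowerSeries (Fin 2) k))
          (MvPowerSeries.X 1)) = HahnSeries.single 1 1 ∧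
      -- φ maps k[[u,v]] into k((u))[[v]]
      (∀ P : MvPowerSeries (Fin 2) k, ∀ j : ℤ, j < 0 →
        (φ (algebraMap (MvPowerSeries (Fin 2) k)
            (FractionRing (MvPowerSeries (Fin 2) k)) P)).coeff j = 0) := by
  let F := (PowerSeries.toIteratedLaurentSeries k).comp (MvPowerSeries.finTwoEquiv k).toRingHom
  have hF : Function.Injective F :=
    PowerSeries.toIteratedLaurentSeries_injective.comp (MvPowerSeries.finTwoEquiv k).injective
  refine ⟨IsFractionRing.lift hF, RingHom.injective _, fun c => ?_, ?_, ?_, fun P j hj => ?_⟩ <;>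
    rw [IsFractionRing.lift_algebraMap]
  · simp [F, LaurentSeries.algebraMap_laurentSeries_apply]
  · simp [F]
  · simp [F]
  · exact PowerSeries.coeff_toIteratedLaurentSeries_of_neg _ hj
end

section
/- Let E and F be vector spaces over an arbitrary field k, let A be a subspace of E with A ≠ 0 and A ≠ E, and let B be a subspace of F with B ≠ 0 and B ≠ F. Then the subspace A ⊗_k F + E ⊗_k B of E ⊗_k F is not of the form U ⊗_k V for any subspaces U ⊆ E and V ⊆ F. -/
open scoped TensorProduct

/-- The subspace `X ⊗ Y` of `E ⊗[k] F`: the span of the pure tensors `x ⊗ y`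
with `x ∈ X`, `y ∈ Y`. -/
noncomputable def tensSub {k E F : Type*} [Field k] [AddCommGroup E] [Module k E]
    [AddCommGroup F] [Module k F] (X : Submodule k E) (Y : Submodule k F) :
    Submodule k (E ⊗[k] F) :=
  Submodule.span k {z | ∃ x ∈ X, ∃ y ∈ Y, z = x ⊗ₜ[k] y}

/-!
A pure tensor `x ⊗ y` with `x, y ≠ 0` lies in `U ⊗ V` only if `x ∈ U` and `y ∈ V`: otherwise a
product functional `φ ⊗ ψ`, with `φ` vanishing on `U` (or `ψ` on `V`) and `φ x * ψ y ≠ 0`,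
separates it from `U ⊗ V`. So if `A ⊗ F + E ⊗ B = U ⊗ V`, then for `e ∉ A`, `f ∉ B` and nonzero
`a ∈ A`, `b ∈ B`, the tensors `e ⊗ b` and `a ⊗ f` give `e ∈ U` and `f ∈ V`, whence
`e ⊗ f ∈ A ⊗ F + E ⊗ B`. This is impossible, since `φ ⊗ ψ` with `φ` vanishing on `A` and `ψ`
on `B` kills `A ⊗ F + E ⊗ B` but not `e ⊗ f`.
-/

namespace tensSub

open Module LinearMap TensorProduct

variable {k E F : Type*} [Field k] [AddCommGroup E] [Module k E] [AddCommGroup F] [Module k F]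
  {X : Submodule k E} {Y : Submodule k F}

lemma le_iff {W : Submodule k (E ⊗[k] F)} :
    tensSub X Y ≤ W ↔ ∀ x ∈ X, ∀ y ∈ Y, x ⊗ₜ[k] y ∈ W := by
  refine Submodule.span_le.trans ⟨fun h x hx y hy ↦ h ⟨x, hx, y, hy, rfl⟩, ?_⟩
  rintro h _ ⟨x, hx, y, hy, rfl⟩
  exact h x hx y hy

lemma tmul_mem {x : E} {y : F} (hx : x ∈ X) (hy : y ∈ Y) : x ⊗ₜ[k] y ∈ tensSub X Y :=
  Submodule.subset_span ⟨x, hx, y, hy, rfl⟩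

lemma le_ker_dualDistrib {φ : Dual k E} {ψ : Dual k F} (h : X ≤ ker φ ∨ Y ≤ ker ψ) :
    tensSub X Y ≤ ker (dualDistrib k E F (φ ⊗ₜ ψ)) := by
  refine le_iff.2 fun x hx y hy ↦ ?_
  rcases h with hφ | hψ
  · simp [mem_ker.1 (hφ hx)]
  · simp [mem_ker.1 (hψ hy)]

lemma tmul_notMem_of_le_ker {φ : Dual k E} {ψ : Dual k F} {x : E} {y : F}
    (h : X ≤ ker φ ∨ Y ≤ ker ψ) (hxy : φ x * ψ y ≠ 0) : x ⊗ₜ[k] y ∉ tensSub X Y :=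
  fun hmem ↦ hxy (by simpa using le_ker_dualDistrib h hmem)

lemma tmul_mem_iff {x : E} {y : F} (hx : x ≠ 0) (hy : y ≠ 0) :
    x ⊗ₜ[k] y ∈ tensSub X Y ↔ x ∈ X ∧ y ∈ Y := by
  refine ⟨fun hxy ↦ ⟨by_contra fun hxX ↦ ?_, by_contra fun hyY ↦ ?_⟩, fun h ↦ tmul_mem h.1 h.2⟩
  · obtain ⟨φ, hφx, hφX⟩ := Submodule.exists_le_ker_of_notMem hxX
    obtain ⟨ψ, hψy, -⟩ := Submodule.exists_le_ker_of_notMem (p := (⊥ : Submodule k F))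
      (by simpa using hy)
    exact tmul_notMem_of_le_ker (.inl hφX) (mul_ne_zero hφx hψy) hxy
  · obtain ⟨φ, hφx, -⟩ := Submodule.exists_le_ker_of_notMem (p := (⊥ : Submodule k E))
      (by simpa using hx)
    obtain ⟨ψ, hψy, hψY⟩ := Submodule.exists_le_ker_of_notMem hyY
    exact tmul_notMem_of_le_ker (.inr hψY) (mul_ne_zero hφx hψy) hxy

lemma tmul_notMem_sup {x : E} {y : F} (hx : x ∉ X) (hy : y ∉ Y) :
    x ⊗ₜ[k] y ∉ tensSub X ⊤ ⊔ tensSub ⊤ Y := fun hxy ↦ by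
  obtain ⟨φ, hφx, hφX⟩ := Submodule.exists_le_ker_of_notMem hx
  obtain ⟨ψ, hψy, hψY⟩ := Submodule.exists_le_ker_of_notMem hy
  have := sup_le (le_ker_dualDistrib (.inl hφX)) (le_ker_dualDistrib (.inr hψY)) hxy
  exact mul_ne_zero hφx hψy (by simpa using this)

end tensSub

/-- if `0 ≠ A ⊊ E` and `0 ≠ B ⊊ F`, then `A ⊗ F + E ⊗ B` is not an
elementary tensor product `U ⊗ V` of subspaces. -/
theorem stmt_11 (k E F : Type*) [Field k] [AddCommGroup E] [Module k E]
    [AddCommGroup F] [Module k F] (A : Submodule k E) (B : Submodule k F)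
    (hA0 : A ≠ ⊥) (hAE : A ≠ ⊤) (hB0 : B ≠ ⊥) (hBF : B ≠ ⊤) :
    ∀ (U : Submodule k E) (V : Submodule k F),
      tensSub A (⊤ : Submodule k F) ⊔ tensSub (⊤ : Submodule k E) B ≠ tensSub U V := by
  intro U V heq
  obtain ⟨a, haA, ha0⟩ := Submodule.exists_mem_ne_zero_of_ne_bot hA0
  obtain ⟨b, hbB, hb0⟩ := Submodule.exists_mem_ne_zero_of_ne_bot hB0
  obtain ⟨e, heA⟩ := SetLike.exists_not_mem_of_ne_top A hAE
  obtain ⟨f, hfB⟩ := SetLike.exists_not_mem_of_ne_top B hBF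
  have he0 : e ≠ 0 := fun h ↦ heA (h ▸ A.zero_mem)
  have hf0 : f ≠ 0 := fun h ↦ hfB (h ▸ B.zero_mem)
  have heU : e ∈ U := by
    have := heq ▸ Submodule.mem_sup_right (tensSub.tmul_mem (Submodule.mem_top (x := e)) hbB)
    exact ((tensSub.tmul_mem_iff he0 hb0).1 this).1
  have hfV : f ∈ V := by
    have := heq ▸ Submodule.mem_sup_left (tensSub.tmul_mem haA (Submodule.mem_top (x := f)))
    exact ((tensSub.tmul_mem_iff ha0 hf0).1 this).2
  exact tensSub.tmul_notMem_sup heA hfB (heq ▸ tensSub.tmul_mem heU hfV)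
end
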